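/- Let (Ω, 𝓕, μ) be a probability space with Ω a standard Borel space and μ a probability measure, and let X : Ω → γ, Y : Ω → β, Z : Ω → δ be measurable maps into measurable spaces. Assume X and Z are conditionally independent given the σ-algebra σ(Y) generated by Y (in the sense of Mathlib's CondIndepFun). Then for every bounded measurable h : γ → ℝ, μ[h ∘ X | σ(Z)] = μ[ μ[h ∘ X | σ(Y)] | σ(Z) ] μ-almost everywhere. -/

import Mathlib

open MeasureTheory ProbabilityTheory

section Aux

variable {Ω γ δ : Type*} [mΩ : MeasurableSpace Ω] [StandardBorelSpace Ω]
    [MeasurableSpace γ] [MeasurableSpace δ]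
    {μ : Measure Ω} [IsProbabilityMeasure μ]
    {X : Ω → γ} {Z : Ω → δ}

/-- Key integral identity: for every integrable `f` (w.r.t. the law of `X`) and every
measurable `t`, `∫_{Z⁻¹ t} f ∘ X = ∫_{Z⁻¹ t} μ[f ∘ X | m']` when `X` and `Z` are
conditionally independent given `m'`. -/
lemma stmt8_key {m' : MeasurableSpace Ω} (hm' : m' ≤ mΩ)
    (hX : Measurable[mΩ] X) (hZ : Measurable[mΩ] Z)
    (hCI : CondIndepFun m' hm' X Z μ) {t : Set δ} (ht : MeasurableSet t) :
    ∀ ⦃f : γ → ℝ⦄, Integrable f (@Measure.map Ω γ mΩ _ X μ) →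
      ∫ ω in Z ⁻¹' t, f (X ω) ∂μ = ∫ ω in Z ⁻¹' t, (μ[f ∘ X | m']) ω ∂μ := by
  letI : MeasurableSpace Ω := mΩ
  have hB : MeasurableSet[mΩ] (Z ⁻¹' t) := hZ ht
  set ν : Measure γ := @Measure.map Ω γ mΩ _ X μ with hν
  haveI : IsProbabilityMeasure ν := hν ▸ Measure.isProbabilityMeasure_map hX.aemeasurable
  have hXmp : @MeasurePreserving Ω γ mΩ _ X μ ν := ⟨hX, hν.symm⟩
  -- the product formula from conditional independence
  have hprod := (condIndepFun_iff_condExp_inter_preimage_eq_mul (hm' := hm') hX hZ).mp hCI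
  -- integral of a conditional probability over `Z ⁻¹' t`
  have hkey : ∀ (s : Set γ), MeasurableSet s →
      ∫ ω in Z ⁻¹' t, (μ[(X ⁻¹' s).indicator (fun _ => (1:ℝ)) | m']) ω ∂μ
        = (μ (X ⁻¹' s ∩ Z ⁻¹' t)).toReal := by
    intro s hs
    have hA : MeasurableSet[mΩ] (X ⁻¹' s) := hX hs
    set f : Ω → ℝ := μ[(X ⁻¹' s).indicator (fun _ => (1:ℝ)) | m'] with hf
    set g : Ω → ℝ := (Z ⁻¹' t).indicator (fun _ => (1:ℝ)) with hg
    have hgint : Integrable g μ := (integrable_const (1:ℝ)).indicator hB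
    have hfint : Integrable f μ := integrable_condExp
    have hfg : (Z ⁻¹' t).indicator f = f * g := by
      ext ω
      by_cases hω : ω ∈ Z ⁻¹' t <;> simp [hg, Set.indicator_apply, hω]
    have hfgint : Integrable (f * g) μ := by
      rw [← hfg]; exact hfint.indicator hB
    have hpull : μ[f * g | m'] =ᵐ[μ] f * μ[g | m'] :=
      condExp_mul_of_stronglyMeasurable_left stronglyMeasurable_condExp hfgint hgint
    have hCIprod : (fun ω => f ω * (μ[g | m']) ω)
        =ᵐ[μ] μ[(X ⁻¹' s ∩ Z ⁻¹' t).indicator (fun _ => (1:ℝ)) | m'] :=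
      (hprod s t hs ht).symm
    calc ∫ ω in Z ⁻¹' t, f ω ∂μ = ∫ ω, (Z ⁻¹' t).indicator f ω ∂μ :=
          (integral_indicator hB).symm
      _ = ∫ ω, (f * g) ω ∂μ := by rw [hfg]
      _ = ∫ ω, (μ[f * g | m']) ω ∂μ := (integral_condExp hm').symm
      _ = ∫ ω, (f * μ[g | m']) ω ∂μ := integral_congr_ae hpull
      _ = ∫ ω, (μ[(X ⁻¹' s ∩ Z ⁻¹' t).indicator (fun _ => (1:ℝ)) | m']) ω ∂μ :=
          integral_congr_ae hCIprod
      _ = ∫ ω, (X ⁻¹' s ∩ Z ⁻¹' t).indicator (fun _ => (1:ℝ)) ω ∂μ :=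
          integral_condExp hm'
      _ = (μ (X ⁻¹' s ∩ Z ⁻¹' t)).toReal := by
          rw [integral_indicator_const (1:ℝ) (hA.inter hB)]; simp; rfl
  -- the induction
  intro f₀ hf₀
  refine Integrable.induction (μ := ν)
    (P := fun f : γ → ℝ =>
      ∫ ω in Z ⁻¹' t, f (X ω) ∂μ = ∫ ω in Z ⁻¹' t, (μ[f ∘ X | m']) ω ∂μ)
    ?_ ?_ ?_ ?_ hf₀
  · -- indicator case
    intro c s hs hνs
    have hA : MeasurableSet[mΩ] (X ⁻¹' s) := hX hs
    have hcomp : (s.indicator fun _ => c) ∘ X = (X ⁻¹' s).indicator fun _ => c := by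
      ext ω; by_cases hω : X ω ∈ s <;> simp [Set.indicator_apply, hω, Function.comp]
    have hsmul : (X ⁻¹' s).indicator (fun _ => c)
        = c • (X ⁻¹' s).indicator (fun _ => (1:ℝ)) := by
      ext ω; by_cases hω : ω ∈ X ⁻¹' s <;> simp [Set.indicator_apply, hω]
    have hce : μ[(s.indicator fun _ => c) ∘ X | m']
        =ᵐ[μ] c • μ[(X ⁻¹' s).indicator (fun _ => (1:ℝ)) | m'] := by
      rw [hcomp, hsmul]
      exact condExp_smul c _ m'
    calc ∫ ω in Z ⁻¹' t, (s.indicator fun _ => c) (X ω) ∂μ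
        = ∫ ω in Z ⁻¹' t, (X ⁻¹' s).indicator (fun _ => c) ω ∂μ := by
          refine setIntegral_congr_ae hB ?_
          filter_upwards with ω _
          by_cases hω : X ω ∈ s <;> simp [Set.indicator_apply, hω]
      _ = ∫ ω in Z ⁻¹' t ∩ X ⁻¹' s, c ∂μ := setIntegral_indicator hA
      _ = (μ (Z ⁻¹' t ∩ X ⁻¹' s)).toReal • c := setIntegral_const c
      _ = c * (μ (X ⁻¹' s ∩ Z ⁻¹' t)).toReal := by
          rw [Set.inter_comm, smul_eq_mul, mul_comm]
      _ = c * ∫ ω in Z ⁻¹' t, (μ[(X ⁻¹' s).indicator (fun _ => (1:ℝ)) | m']) ω ∂μ := by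
          rw [hkey s hs]
      _ = ∫ ω in Z ⁻¹' t, c • (μ[(X ⁻¹' s).indicator (fun _ => (1:ℝ)) | m']) ω ∂μ := by
          rw [integral_smul]; rfl
      _ = ∫ ω in Z ⁻¹' t, (μ[(s.indicator fun _ => c) ∘ X | m']) ω ∂μ := by
          refine setIntegral_congr_ae hB ?_
          filter_upwards [hce] with ω hω _
          simp [hω]
  · -- additivity
    intro f g hdisj hfint hgint hf hg
    have hfX : Integrable (f ∘ X) μ :=
      (integrable_map_measure hfint.aestronglyMeasurable hX.aemeasurable).mp hfint
    have hgX : Integrable (g ∘ X) μ :=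
      (integrable_map_measure hgint.aestronglyMeasurable hX.aemeasurable).mp hgint
    have hcomp : (f + g) ∘ X = f ∘ X + g ∘ X := rfl
    have hce : μ[(f + g) ∘ X | m'] =ᵐ[μ] μ[f ∘ X | m'] + μ[g ∘ X | m'] := by
      rw [hcomp]; exact condExp_add hfX hgX m'
    calc ∫ ω in Z ⁻¹' t, (f + g) (X ω) ∂μ
        = ∫ ω in Z ⁻¹' t, (f (X ω) + g (X ω)) ∂μ := rfl
      _ = (∫ ω in Z ⁻¹' t, f (X ω) ∂μ) + ∫ ω in Z ⁻¹' t, g (X ω) ∂μ :=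
          integral_add hfX.integrableOn hgX.integrableOn
      _ = (∫ ω in Z ⁻¹' t, (μ[f ∘ X | m']) ω ∂μ)
            + ∫ ω in Z ⁻¹' t, (μ[g ∘ X | m']) ω ∂μ := by
          rw [hf, hg]
      _ = ∫ ω in Z ⁻¹' t, ((μ[f ∘ X | m']) ω + (μ[g ∘ X | m']) ω) ∂μ :=
          (integral_add integrable_condExp.integrableOn integrable_condExp.integrableOn).symm
      _ = ∫ ω in Z ⁻¹' t, (μ[(f + g) ∘ X | m']) ω ∂μ := by
          refine setIntegral_congr_ae hB ?_
          filter_upwards [hce] with ω hω _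
          simp [hω]
  · -- closedness in L¹
    haveI : Fact ((1 : ENNReal) ≤ 1) := ⟨le_refl _⟩
    have hΦcont : Continuous (Lp.compMeasurePreserving (p := 1) (E := ℝ) X hXmp) :=
      (Lp.isometry_compMeasurePreserving hXmp).continuous
    have hF : Continuous fun u : γ →₁[ν] ℝ =>
        ∫ ω in Z ⁻¹' t, (Lp.compMeasurePreserving X hXmp u) ω ∂μ :=
      (continuous_setIntegral (Z ⁻¹' t)).comp hΦcont
    have hG : Continuous fun u : γ →₁[ν] ℝ =>
        ∫ ω in Z ⁻¹' t, (condExpL1CLM ℝ hm' μ (Lp.compMeasurePreserving X hXmp u)) ω ∂μ :=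
      (continuous_setIntegral (Z ⁻¹' t)).comp
        ((condExpL1CLM ℝ hm' μ).continuous.comp hΦcont)
    have hset : {u : γ →₁[ν] ℝ |
        ∫ ω in Z ⁻¹' t, (u : γ → ℝ) (X ω) ∂μ =
          ∫ ω in Z ⁻¹' t, (μ[(u : γ → ℝ) ∘ X | m']) ω ∂μ}
        = {u : γ →₁[ν] ℝ |
            (∫ ω in Z ⁻¹' t, (Lp.compMeasurePreserving X hXmp u) ω ∂μ) =
            ∫ ω in Z ⁻¹' t, (condExpL1CLM ℝ hm' μ (Lp.compMeasurePreserving X hXmp u)) ω ∂μ} := by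
      ext u
      have huΦ : (Lp.compMeasurePreserving X hXmp u : Ω → ℝ) =ᵐ[μ] (u : γ → ℝ) ∘ X :=
        Lp.coeFn_compMeasurePreserving u hXmp
      have h1 : ∫ ω in Z ⁻¹' t, (u : γ → ℝ) (X ω) ∂μ
          = ∫ ω in Z ⁻¹' t, (Lp.compMeasurePreserving X hXmp u) ω ∂μ := by
        refine setIntegral_congr_ae hB ?_
        filter_upwards [huΦ] with ω hω _
        exact hω.symm
      have h2 : μ[(u : γ → ℝ) ∘ X | m']
          =ᵐ[μ] condExpL1CLM ℝ hm' μ (Lp.compMeasurePreserving X hXmp u) := by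
        have e1 : μ[(u : γ → ℝ) ∘ X | m']
            =ᵐ[μ] μ[(Lp.compMeasurePreserving X hXmp u : Ω → ℝ) | m'] :=
          condExp_congr_ae huΦ.symm
        have hint := L1.integrable_coeFn (Lp.compMeasurePreserving X hXmp u)
        have e2 := condExp_ae_eq_condExpL1CLM (E := ℝ) hm' hint
        rw [Integrable.toL1_coeFn] at e2
        exact e1.trans e2
      have h2' : ∫ ω in Z ⁻¹' t, (μ[(u : γ → ℝ) ∘ X | m']) ω ∂μ
          = ∫ ω in Z ⁻¹' t, (condExpL1CLM ℝ hm' μ (Lp.compMeasurePreserving X hXmp u)) ω ∂μ := by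
        refine setIntegral_congr_ae hB ?_
        filter_upwards [h2] with ω hω _
        exact hω
      simp only [Set.mem_setOf_eq, h1, h2']
    rw [hset]
    exact isClosed_eq hF hG
  · -- a.e. congruence
    intro f g hfg hfint hf
    have hfgX : f ∘ X =ᵐ[μ] g ∘ X := ae_of_ae_map hX.aemeasurable hfg
    have h1 : ∫ ω in Z ⁻¹' t, g (X ω) ∂μ = ∫ ω in Z ⁻¹' t, f (X ω) ∂μ := by
      refine setIntegral_congr_ae hB ?_
      filter_upwards [hfgX] with ω hω _
      exact hω.symm
    have h2 : ∫ ω in Z ⁻¹' t, (μ[g ∘ X | m']) ω ∂μ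
        = ∫ ω in Z ⁻¹' t, (μ[f ∘ X | m']) ω ∂μ := by
      refine setIntegral_congr_ae hB ?_
      filter_upwards [condExp_congr_ae (m := m') hfgX] with ω hω _
      exact hω.symm
    rw [h1, h2, hf]

end Aux

/-- Tower-property identity along a Markov chain: if `X` and `Z` are conditionally
independent given `σ(Y)`, then `μ[h ∘ X | σ(Z)] = μ[ μ[h ∘ X | σ(Y)] | σ(Z) ]` a.e.
for every bounded measurable `h`. -/
theorem stmt8 {Ω β γ δ : Type*} [MeasurableSpace Ω] [StandardBorelSpace Ω]
    [MeasurableSpace β] [MeasurableSpace γ] [MeasurableSpace δ]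
    (μ : Measure Ω) [IsProbabilityMeasure μ]
    (X : Ω → γ) (Y : Ω → β) (Z : Ω → δ)
    (hX : Measurable X) (hY : Measurable Y) (hZ : Measurable Z)
    (hCI : CondIndepFun (MeasurableSpace.comap Y inferInstance) hY.comap_le X Z μ)
    (h : γ → ℝ) (hmeas : Measurable h) (hbdd : ∃ C : ℝ, ∀ x, |h x| ≤ C) :
    μ[h ∘ X | MeasurableSpace.comap Z inferInstance]
      =ᵐ[μ] μ[μ[h ∘ X | MeasurableSpace.comap Y inferInstance] |
              MeasurableSpace.comap Z inferInstance] := by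
  obtain ⟨C, hC⟩ := hbdd
  haveI : IsProbabilityMeasure (μ.map X) := Measure.isProbabilityMeasure_map hX.aemeasurable
  have hhint : Integrable h (μ.map X) := by
    refine Integrable.mono' (integrable_const C) hmeas.aestronglyMeasurable ?_
    filter_upwards with x
    simpa [Real.norm_eq_abs] using hC x
  have hhX : Integrable (h ∘ X) μ :=
    (integrable_map_measure hhint.aestronglyMeasurable hX.aemeasurable).mp hhint
  refine (ae_eq_condExp_of_forall_setIntegral_eq hZ.comap_le hhX ?_ ?_ ?_).symm
  · intro s _ _
    exact integrable_condExp.integrableOn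
  · rintro s ⟨t, ht, rfl⟩ _
    calc ∫ ω in Z ⁻¹' t,
          (μ[μ[h ∘ X | MeasurableSpace.comap Y inferInstance] |
              MeasurableSpace.comap Z inferInstance]) ω ∂μ
        = ∫ ω in Z ⁻¹' t, (μ[h ∘ X | MeasurableSpace.comap Y inferInstance]) ω ∂μ :=
          setIntegral_condExp hZ.comap_le integrable_condExp ⟨t, ht, rfl⟩
      _ = ∫ ω in Z ⁻¹' t, h (X ω) ∂μ := (stmt8_key hY.comap_le hX hZ hCI ht hhint).symm
      _ = ∫ ω in Z ⁻¹' t, (h ∘ X) ω ∂μ := rfl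
  · exact StronglyMeasurable.aestronglyMeasurable stronglyMeasurable_condExp
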